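/- Let f₀ be a continuous density on [0,1] in the Hölder class H_∞(β,L) with β ∈ (0,1], bounded below by c₀ > 0. Then the Hellinger approximation error by histograms satisfies b(k)² = 1 − k∑_{j=1}^k (∫_{I_j}√f₀)² ≤ C k^{−2β} for a constant C depending on L, β, c₀. -/

import Mathlib

/-!
On a cell `I` of length `1/k`, `∫_I f₀ - k (∫_I √f₀)²` is `|I|` times the variance of `√f₀` on `I`,
so it is at most `∫_I (√f₀ - c)²` for every constant `c`. Taking `c = √f₀(b)` at the right endpoint `b`,
the lower bound `f₀ ≥ c₀` gives `|√f₀ x - √f₀ b| ≤ |f₀ x - f₀ b| / (2√c₀) ≤ L k^{-β} / (2√c₀)`, so each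
cell contributes at most `L²/(4c₀) · k^{-2β} / k`. Summing over the `k` cells, where `∑ ∫_I f₀ = 1`,
gives the bound with `C = L²/(4c₀)`.
-/

open MeasureTheory Real Set

noncomputable section

def cell (k : ℕ) (j : Fin k) : Set ℝ := Set.Ioc ((j : ℝ) / k) (((j : ℝ) + 1) / k)

theorem integral_sq_sub_sq_integral_div_le {α : Type*} [MeasurableSpace α] {μ : Measure α}
    [IsFiniteMeasure μ] {g : α → ℝ} (hg : MemLp g 2 μ) (c : ℝ) :
    ∫ x, g x ^ 2 ∂μ - (∫ x, g x ∂μ) ^ 2 / μ.real univ ≤ ∫ x, (g x - c) ^ 2 ∂μ := by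
  rcases eq_zero_or_neZero μ with rfl | _
  · simp
  have hm : 0 < μ.real univ := measureReal_univ_pos
  have hg1 : Integrable g μ := hg.integrable one_le_two
  have hexpand : ∫ x, (g x - c) ^ 2 ∂μ
      = ∫ x, g x ^ 2 ∂μ - 2 * c * ∫ x, g x ∂μ + c ^ 2 * μ.real univ := by
    have : (fun x => (g x - c) ^ 2) = fun x => g x ^ 2 - 2 * c * g x + c ^ 2 := by
      funext x; ring
    rw [this, integral_add (f := fun x => g x ^ 2 - 2 * c * g x)
        (hg.integrable_sq.sub (hg1.const_mul _)) (integrable_const _),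
      integral_sub hg.integrable_sq (hg1.const_mul _), integral_const_mul, integral_const,
      smul_eq_mul, mul_comm (μ.real univ)]
  have hsq : 0 ≤ (∫ x, g x ∂μ - c * μ.real univ) ^ 2 / μ.real univ := by positivity
  have hsq_eq : (∫ x, g x ∂μ - c * μ.real univ) ^ 2 / μ.real univ
      = (∫ x, g x ∂μ) ^ 2 / μ.real univ - 2 * c * ∫ x, g x ∂μ + c ^ 2 * μ.real univ := by
    field_simp
    ring
  linarith

theorem sq_sqrt_sub_sqrt_le {c₀ a b : ℝ} (hc₀ : 0 < c₀) (ha : c₀ ≤ a) (hb : c₀ ≤ b) :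
    (√a - √b) ^ 2 ≤ (a - b) ^ 2 / (4 * c₀) := by
  have hsum : 4 * c₀ ≤ (√a + √b) ^ 2 := by
    have := Real.sqrt_le_sqrt ha
    have := Real.sqrt_le_sqrt hb
    nlinarith [Real.sq_sqrt hc₀.le, Real.sqrt_nonneg c₀]
  have hprod : (√a - √b) * (√a + √b) = a - b := by
    nlinarith [Real.sq_sqrt (hc₀.le.trans ha), Real.sq_sqrt (hc₀.le.trans hb)]
  rw [le_div_iff₀ (by positivity), ← hprod, mul_pow]
  exact mul_le_mul_of_nonneg_left hsum (sq_nonneg _)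

theorem cell_subset_Ioc {k : ℕ} (j : Fin k) : cell k j ⊆ Ioc 0 1 := by
  have hk : (0 : ℝ) < k := by exact_mod_cast j.pos
  refine Ioc_subset_Ioc (by positivity) ((div_le_one hk).2 ?_)
  exact_mod_cast j.isLt

theorem volume_real_cell {k : ℕ} (j : Fin k) : volume.real (cell k j) = (k : ℝ)⁻¹ := by
  rw [cell, Real.volume_real_Ioc_of_le (by gcongr; linarith)]
  ring

theorem abs_sub_le_of_mem_cell {k : ℕ} {j : Fin k} {x : ℝ} (hx : x ∈ cell k j) :
    |x - ((j : ℝ) + 1) / k| ≤ (k : ℝ)⁻¹ := by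
  obtain ⟨h₁, h₂⟩ := hx
  rw [abs_sub_comm, abs_of_nonneg (by linarith)]
  calc ((j : ℝ) + 1) / k - x ≤ ((j : ℝ) + 1) / k - j / k := by linarith
    _ = (k : ℝ)⁻¹ := by ring

theorem sum_setIntegral_cell {f : ℝ → ℝ} (hf : IntegrableOn f (Ioc 0 1)) {k : ℕ} (hk : 0 < k) :
    ∑ j : Fin k, ∫ x in cell k j, f x = ∫ x in Ioc 0 1, f x := by
  have hk0 : (k : ℝ) ≠ 0 := Nat.cast_ne_zero.2 hk.ne'
  have hle (i : ℕ) : (i : ℝ) / k ≤ ((i + 1 : ℕ) : ℝ) / k := by gcongr; simp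
  have hcell (j : Fin k) : cell k j = Ioc ((j : ℕ) / k : ℝ) ((j + 1 : ℕ) / k) := by
    simp [cell]
  simp_rw [hcell]
  rw [Fin.sum_univ_eq_sum_range (fun i => ∫ x in Ioc ((i : ℝ) / k) (((i + 1 : ℕ) : ℝ) / k), f x)]
  simp_rw [← intervalIntegral.integral_of_le (hle _)]
  rw [intervalIntegral.sum_integral_adjacent_intervals (a := fun i : ℕ => (i : ℝ) / k)]
  · simp [hk0, intervalIntegral.integral_of_le zero_le_one]
  · intro i hi
    rw [intervalIntegrable_iff_integrableOn_Ioc_of_le (hle i)]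
    simpa [hcell] using hf.mono_set (cell_subset_Ioc (⟨i, hi⟩ : Fin k))

theorem setIntegral_cell_sub_mul_sq_le {f : ℝ → ℝ} {β L c₀ : ℝ} (hβ : 0 ≤ β) (hL : 0 ≤ L)
    (hc₀ : 0 < c₀) (hf : ContinuousOn f (Icc 0 1))
    (hHolder : ∀ x ∈ Icc (0 : ℝ) 1, ∀ y ∈ Icc (0 : ℝ) 1, |f x - f y| ≤ L * |x - y| ^ β)
    (hlb : ∀ x ∈ Icc (0 : ℝ) 1, c₀ ≤ f x) {k : ℕ} (j : Fin k) :
    (∫ x in cell k j, f x) - k * (∫ x in cell k j, √(f x)) ^ 2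
      ≤ L ^ 2 / (4 * c₀) * (k : ℝ) ^ (-2 * β) * (k : ℝ)⁻¹ := by
  have hk : (0 : ℝ) < k := by exact_mod_cast j.pos
  have hcell : cell k j ⊆ Icc 0 1 := (cell_subset_Ioc j).trans Ioc_subset_Icc_self
  have hmeas : MeasurableSet (cell k j) := measurableSet_Ioc
  have : IsFiniteMeasure (volume.restrict (cell k j)) := by unfold cell; infer_instance
  set b : ℝ := ((j : ℝ) + 1) / k
  have hb : b ∈ Icc (0 : ℝ) 1 := hcell (right_mem_Ioc.2 (by gcongr; linarith))
  have hsq_sqrt : ∀ x ∈ cell k j, √(f x) ^ 2 = f x := fun x hx =>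
    sq_sqrt (hc₀.le.trans (hlb x (hcell hx)))
  have hf_int : IntegrableOn f (cell k j) := hf.integrableOn_Icc.mono_set hcell
  have hsqrt_memLp : MemLp (fun x => √(f x)) 2 (volume.restrict (cell k j)) :=
    (memLp_two_iff_integrable_sq ((hf.mono hcell).sqrt.aestronglyMeasurable
      hmeas)).2 (hf_int.congr_fun (fun x hx => (hsq_sqrt x hx).symm) hmeas)
  have hpow : ((k : ℝ)⁻¹ ^ β) ^ 2 = (k : ℝ) ^ (-2 * β) := by
    rw [← rpow_natCast, ← rpow_mul (by positivity), inv_rpow hk.le, ← rpow_neg hk.le]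
    ring_nf
  have hpoint : ∀ x ∈ cell k j,
      (√(f x) - √(f b)) ^ 2 ≤ L ^ 2 / (4 * c₀) * (k : ℝ) ^ (-2 * β) := by
    intro x hx
    have hf_diff : |f x - f b| ≤ L * (k : ℝ)⁻¹ ^ β := by
      refine (hHolder x (hcell hx) b hb).trans ?_
      gcongr
      exact abs_sub_le_of_mem_cell hx
    calc (√(f x) - √(f b)) ^ 2 ≤ (f x - f b) ^ 2 / (4 * c₀) :=
          sq_sqrt_sub_sqrt_le hc₀ (hlb x (hcell hx)) (hlb b hb)
      _ ≤ (L * (k : ℝ)⁻¹ ^ β) ^ 2 / (4 * c₀) := by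
          gcongr ?_ / _
          exact sq_le_sq' (abs_le.1 hf_diff).1 (abs_le.1 hf_diff).2
      _ = L ^ 2 / (4 * c₀) * (k : ℝ) ^ (-2 * β) := by rw [mul_pow, hpow]; ring
  calc (∫ x in cell k j, f x) - k * (∫ x in cell k j, √(f x)) ^ 2
      = (∫ x in cell k j, √(f x) ^ 2) - (∫ x in cell k j, √(f x)) ^ 2 /
          (volume.restrict (cell k j)).real univ := by
        rw [setIntegral_congr_fun hmeas hsq_sqrt, measureReal_restrict_apply_univ,
          volume_real_cell, div_inv_eq_mul, mul_comm]
    _ ≤ ∫ x in cell k j, (√(f x) - √(f b)) ^ 2 :=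
        integral_sq_sub_sq_integral_div_le hsqrt_memLp _
    _ ≤ ∫ _ in cell k j, L ^ 2 / (4 * c₀) * (k : ℝ) ^ (-2 * β) :=
        setIntegral_mono_on (hsqrt_memLp.sub (memLp_const _)).integrable_sq
          (integrableOn_const (by simp [cell])) hmeas hpoint
    _ = L ^ 2 / (4 * c₀) * (k : ℝ) ^ (-2 * β) * (k : ℝ)⁻¹ := by
        rw [setIntegral_const, volume_real_cell, smul_eq_mul, mul_comm]

theorem stmt_12_general (β L c₀ : ℝ) (hβ0 : 0 < β) (hL : 0 < L) (hc₀ : 0 < c₀) :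
    ∃ C : ℝ, 0 < C ∧
      ∀ (f₀ : ℝ → ℝ), ContinuousOn f₀ (Set.Icc (0 : ℝ) 1) →
        (∀ x ∈ Set.Icc (0 : ℝ) 1, ∀ y ∈ Set.Icc (0 : ℝ) 1,
          |f₀ x - f₀ y| ≤ L * |x - y| ^ β) →
        (∀ x ∈ Set.Icc (0 : ℝ) 1, c₀ ≤ f₀ x) →
        (∫ x in Set.Ioc (0 : ℝ) 1, f₀ x) = 1 →
      ∀ k : ℕ, 0 < k →
        1 - (k : ℝ) * ∑ j : Fin k, (∫ y in cell k j, Real.sqrt (f₀ y)) ^ 2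
          ≤ C * (k : ℝ) ^ (-2 * β) := by
  refine ⟨L ^ 2 / (4 * c₀), by positivity, fun f₀ hcont hHolder hlb hint k hk => ?_⟩
  have hk0 : (k : ℝ) ≠ 0 := Nat.cast_ne_zero.2 hk.ne'
  have hsum := sum_setIntegral_cell (hcont.integrableOn_Icc.mono_set Ioc_subset_Icc_self) hk
  calc 1 - (k : ℝ) * ∑ j : Fin k, (∫ y in cell k j, √(f₀ y)) ^ 2
      = ∑ j : Fin k, ((∫ y in cell k j, f₀ y) - k * (∫ y in cell k j, √(f₀ y)) ^ 2) := by
        rw [Finset.sum_sub_distrib, hsum, hint, Finset.mul_sum]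
    _ ≤ ∑ _j : Fin k, L ^ 2 / (4 * c₀) * (k : ℝ) ^ (-2 * β) * (k : ℝ)⁻¹ :=
        Finset.sum_le_sum fun j _ =>
          setIntegral_cell_sub_mul_sq_le hβ0.le hL.le hc₀ hcont hHolder hlb j
    _ = L ^ 2 / (4 * c₀) * (k : ℝ) ^ (-2 * β) := by
        rw [Finset.sum_const, Finset.card_univ, Fintype.card_fin, nsmul_eq_mul]
        field_simp

/-- For a continuous density `f₀` on `[0,1]` which is `β`-Hölder with
constant `L` (`β ∈ (0,1]`) and bounded below by `c₀ > 0`, the squared Hellinger histogram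
approximation error satisfies `b(k)² = 1 − k ∑_j (∫_{I_j} √f₀)² ≤ C k^{−2β}` for a constant
`C` depending only on `L, β, c₀`. -/
theorem stmt_12 (β L c₀ : ℝ) (hβ0 : 0 < β) (hβ1 : β ≤ 1) (hL : 0 < L) (hc₀ : 0 < c₀) :
    ∃ C : ℝ, 0 < C ∧
      ∀ (f₀ : ℝ → ℝ), ContinuousOn f₀ (Set.Icc (0 : ℝ) 1) →
        (∀ x ∈ Set.Icc (0 : ℝ) 1, ∀ y ∈ Set.Icc (0 : ℝ) 1,
          |f₀ x - f₀ y| ≤ L * |x - y| ^ β) →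
        (∀ x ∈ Set.Icc (0 : ℝ) 1, c₀ ≤ f₀ x) →
        (∫ x in Set.Ioc (0 : ℝ) 1, f₀ x) = 1 →
      ∀ k : ℕ, 0 < k →
        1 - (k : ℝ) * ∑ j : Fin k, (∫ y in cell k j, Real.sqrt (f₀ y)) ^ 2
          ≤ C * (k : ℝ) ^ (-2 * β) :=
  stmt_12_general β L c₀ hβ0 hL hc₀

end
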